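/- arXiv:1410.3268 — 2 statements merged into one kernel-verified Lean document; each statement's English description precedes it below -/
import Mathlib

section
/- Let $\overline{\Delta}_{\mathcal{H}} = \partial_r^2 + ((2n-1)\cot r - \tan r)\partial_r + \tan^2 r\, \partial_\theta^2$ be the radial horizontal Laplacian of the Hopf fibration, acting on smooth functions of $(r,\theta) \in (0,\pi/2) \times \mathbb{R}$. For integers $k \ge 0$, $m \ge 0$, the function $f(r,\theta) = e^{ik\theta}(\cos r)^{k} P_m^{n-1,k}(\cos 2r)$ satisfies $\overline{\Delta}_{\mathcal{H}} f = -(4m(m+k+n) + 2kn) f$. -/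
open Real Set

noncomputable section

/-- Jacobi polynomial P_m^{n-1,k} defined by the Rodrigues-type formula. -/
def jacobiP (n k m : ℕ) : ℝ → ℝ :=
  fun x => ((-1 : ℝ) ^ m / (2 ^ m * (Nat.factorial m) * (1 - x) ^ (n - 1) * (1 + x) ^ k)) *
    iteratedDeriv m (fun y => (1 - y) ^ (n - 1 + m) * (1 + y) ^ (k + m)) x

/-- Radial horizontal Laplacian of the Hopf fibration:
    ∂_r² + ((2n-1) cot r - tan r) ∂_r + tan² r ∂_θ², acting on smooth
    complex-valued functions of (r, θ). -/
def hopfRadialH (n : ℕ) (F : ℝ → ℝ → ℂ) : ℝ → ℝ → ℂ :=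
  fun r θ =>
    deriv (fun s => deriv (fun s' => F s' θ) s) r
    + (((2 * (n : ℝ) - 1) * (Real.cos r / Real.sin r) - Real.tan r : ℝ) : ℂ) *
        deriv (fun s => F s θ) r
    + ((Real.tan r ^ 2 : ℝ) : ℂ) * deriv (fun t => deriv (fun t' => F r t') t) θ

/-!
Separating variables, `e^{ikθ}` turns `∂_θ²` into `-k²`. Conjugation by `cos^k r` turns the radial
operator into `∂² + ((2n-1) cot r - (2k+1) tan r) ∂ - 2kn`, and in the variable `x = cos 2r` this
is `4 L - 2kn`, where `L = (1-x²) ∂² + (β-α-(α+β+2)x) ∂` is Jacobi's operator for `α = n-1`,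
`β = k`. Jacobi's equation `L P_m = -m(m+α+β+1) P_m` comes from Rodrigues' formula: the weight
`w_{a,b} = (1-x)^a (1+x)^b` satisfies `(1-x²) w' = (b-a-(a+b)x) w`; differentiating this `m+1`
times for `w_{α+m,β+m}` gives a second order equation for `R = w_{α+m,β+m}^{(m)}`, and
substituting `R = c w_{α,β} P_m` and cancelling `w_{α,β}` leaves Jacobi's equation.
-/

open Polynomial Topology

section
variable {R : Type*} [CommRing R]

theorem one_sub_sq_mul_derivative_pow {f P : R[X]} (hf : (1 - X ^ 2) * derivative f = P * f)
    (n : ℕ) : (1 - X ^ 2) * derivative (f ^ n) = C (n : R) * P * f ^ n := by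
  induction n with
  | zero => simp
  | succ n ih =>
    rw [pow_succ f, derivative_mul]
    simp only [Nat.cast_succ, map_add, map_one]
    linear_combination f * ih + f ^ n * hf

theorem one_sub_sq_mul_iterate_derivative {p : R[X]} {b c : R}
    (hp : (1 - X ^ 2) * derivative p = (C b - C c * X) * p) (j : ℕ) :
    (1 - X ^ 2) * derivative^[j + 2] p =
      (C b - C (c - 2 * j - 2) * X) * derivative^[j + 1] p
        + C ((j + 1) * (j - c)) * derivative^[j] p := by
  induction j with
  | zero =>
    have h := congrArg derivative hp
    simp only [derivative_mul, derivative_sub, derivative_one, derivative_X_sq,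
      derivative_C, derivative_X] at h
    simp only [Function.iterate_succ_apply', Function.iterate_zero_apply, Nat.cast_zero]
    simp only [map_sub, map_mul, map_zero, map_ofNat, map_add, map_one] at h ⊢
    linear_combination h
  | succ j ih =>
    have h := congrArg derivative ih
    simp only [derivative_mul, derivative_sub, derivative_add, derivative_one, derivative_X_sq,
      derivative_C, derivative_X, ← Function.iterate_succ_apply' derivative] at h
    simp only [map_sub, map_mul, map_add, map_one, map_ofNat, map_natCast] at h ⊢
    push_cast at h ⊢
    linear_combination h

end

def jacobiWeight (a b : ℕ) : ℝ[X] := (1 - X) ^ a * (1 + X) ^ b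

def rodrigues (a b m : ℕ) : ℝ[X] := derivative^[m] (jacobiWeight (a + m) (b + m))

-- `P_m^{(a,b)}`; the polynomial division is exact by `jacobiWeight_dvd_rodrigues`.
def jacobiPoly (a b m : ℕ) : ℝ[X] :=
  C ((-1 : ℝ) ^ m / (2 ^ m * m.factorial)) * (rodrigues a b m / jacobiWeight a b)

theorem jacobiWeight_ne_zero (a b : ℕ) : jacobiWeight a b ≠ 0 :=
  mul_ne_zero (pow_ne_zero _ fun h => by simpa using congrArg (eval 0) h)
    (pow_ne_zero _ fun h => by simpa using congrArg (eval 0) h)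

theorem one_sub_sq_mul_derivative_jacobiWeight (a b : ℕ) :
    (1 - X ^ 2) * derivative (jacobiWeight a b) =
      (C ((b : ℝ) - a) - C ((a : ℝ) + b) * X) * jacobiWeight a b := by
  have h₁ := one_sub_sq_mul_derivative_pow (f := (1 : ℝ[X]) - X) (P := -(1 + X))
    (by simp only [derivative_sub, derivative_one, derivative_X]; ring) a
  have h₂ := one_sub_sq_mul_derivative_pow (f := (1 : ℝ[X]) + X) (P := 1 - X)
    (by simp only [derivative_add, derivative_one, derivative_X]; ring) b
  rw [jacobiWeight, derivative_mul]
  simp only [map_sub, map_add, map_natCast] at h₁ h₂ ⊢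
  linear_combination (1 + X) ^ b * h₁ + (1 - X) ^ a * h₂

theorem jacobiWeight_dvd_rodrigues (a b m : ℕ) : jacobiWeight a b ∣ rodrigues a b m := by
  have hcop : IsCoprime ((1 : ℝ[X]) - X) (1 + X) :=
    ⟨C (1 / 2), C (1 / 2), by
      rw [← mul_add, show (1 : ℝ[X]) - X + (1 + X) = C 2 by rw [map_ofNat]; ring, ← C_mul]
      norm_num⟩
  have h₁ := pow_sub_dvd_iterate_derivative_of_pow_dvd m
    (dvd_mul_right (((1 : ℝ[X]) - X) ^ (a + m)) ((1 + X) ^ (b + m)))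
  have h₂ := pow_sub_dvd_iterate_derivative_of_pow_dvd m
    (dvd_mul_left (((1 : ℝ[X]) + X) ^ (b + m)) ((1 - X) ^ (a + m)))
  rw [Nat.add_sub_cancel] at h₁ h₂
  exact hcop.pow.mul_dvd h₁ h₂

theorem jacobiWeight_mul_rodrigues_div (a b m : ℕ) :
    jacobiWeight a b * (rodrigues a b m / jacobiWeight a b) = rodrigues a b m :=
  EuclideanDomain.mul_div_cancel' (jacobiWeight_ne_zero a b) (jacobiWeight_dvd_rodrigues a b m)

theorem jacobi_ode_of_jacobiWeight_mul_eq {a b m : ℕ} {Q : ℝ[X]}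
    (hQ : jacobiWeight a b * Q = rodrigues a b m) :
    (1 - X ^ 2) * derivative (derivative Q) +
        (C ((b : ℝ) - a) - C ((a : ℝ) + b + 2) * X) * derivative Q +
      C ((m : ℝ) * (m + a + b + 1)) * Q = 0 := by
  have hw := one_sub_sq_mul_derivative_jacobiWeight a b
  have hw' := congrArg derivative hw
  have hR := one_sub_sq_mul_iterate_derivative
    (one_sub_sq_mul_derivative_jacobiWeight (a + m) (b + m)) m
  simp only [Function.iterate_succ_apply'] at hR
  rw [show derivative^[m] (jacobiWeight (a + m) (b + m)) = jacobiWeight a b * Q from hQ.symm] at hR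
  simp only [derivative_mul, derivative_sub, derivative_add, derivative_one, derivative_X_sq,
    derivative_C, derivative_X] at hw' hR
  simp only [map_sub, map_mul, map_add, map_one, map_ofNat, map_natCast] at hw hw' hR ⊢
  push_cast at hw hw' hR ⊢
  refine (mul_eq_zero.1 ?_).resolve_left
    (mul_ne_zero (jacobiWeight_ne_zero a b) (jacobiWeight_ne_zero 1 1))
  rw [show jacobiWeight 1 1 = 1 - X ^ 2 by rw [jacobiWeight]; ring]
  linear_combination (1 - X ^ 2) * hR - (1 - X ^ 2) * Q * hw' - 2 * (1 - X ^ 2) * derivative Q * hw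

theorem jacobiPoly_ode (a b m : ℕ) :
    (1 - X ^ 2) * derivative (derivative (jacobiPoly a b m)) +
        (C ((b : ℝ) - a) - C ((a : ℝ) + b + 2) * X) * derivative (jacobiPoly a b m) +
      C ((m : ℝ) * (m + a + b + 1)) * jacobiPoly a b m = 0 := by
  have h := jacobi_ode_of_jacobiWeight_mul_eq (jacobiWeight_mul_rodrigues_div a b m)
  simp only [jacobiPoly, derivative_C_mul]
  linear_combination C ((-1 : ℝ) ^ m / (2 ^ m * m.factorial)) * h

theorem iteratedDeriv_eval (p : ℝ[X]) (j : ℕ) :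
    iteratedDeriv j (fun x => p.eval x) = fun x => (derivative^[j] p).eval x := by
  induction j generalizing p with
  | zero => simp
  | succ j ih =>
    rw [iteratedDeriv_succ', _root_.funext fun x => p.deriv (x := x), ih,
      Function.iterate_succ_apply]

theorem jacobiP_eq_eval_jacobiPoly (a b m : ℕ) {x : ℝ} (hx : x ∈ Ioo (-1) 1) :
    jacobiP (a + 1) b m x = (jacobiPoly a b m).eval x := by
  have hW : (fun y : ℝ => (1 - y) ^ (a + 1 - 1 + m) * (1 + y) ^ (b + m)) =
      fun y => (jacobiWeight (a + m) (b + m)).eval y := by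
    simp [jacobiWeight]
  have h₁ : (1 - x) ^ a ≠ 0 := pow_ne_zero _ (by linarith [hx.2])
  have h₂ : (1 + x) ^ b ≠ 0 := pow_ne_zero _ (by linarith [hx.1])
  rw [jacobiP, hW, iteratedDeriv_eval, ← rodrigues, ← jacobiWeight_mul_rodrigues_div, jacobiPoly]
  simp only [eval_mul, eval_C, jacobiWeight, eval_pow, eval_sub, eval_add, eval_one, eval_X,
    Nat.add_sub_cancel]
  field_simp

theorem HasDerivAt.cos_pow_mul {f : ℝ → ℝ} {f' r : ℝ} (k : ℕ) (hf : HasDerivAt f f' r)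
    (hc : Real.cos r ≠ 0) :
    HasDerivAt (fun s => Real.cos s ^ k * f s)
      (Real.cos r ^ k * (f' - k * Real.tan r * f r)) r := by
  refine (((Real.hasDerivAt_cos r).pow k).mul hf).congr_deriv ?_
  rw [tan_eq_sin_div_cos]
  cases k with
  | zero => simp
  | succ k =>
    simp only [Pi.pow_apply, Nat.add_sub_cancel]
    field_simp
    ring

theorem hasDerivAt_eval_cos_two_mul (p : ℝ[X]) (r : ℝ) :
    HasDerivAt (fun s => p.eval (cos (2 * s)))
      (-2 * sin (2 * r) * (derivative p).eval (cos (2 * r))) r := by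
  have h := (p.hasDerivAt _).comp r (((hasDerivAt_id r).const_mul 2).cos)
  simpa [Function.comp_def, mul_comm] using h

def cosPowMulEval (k : ℕ) (y : ℝ[X]) (s : ℝ) : ℝ := cos s ^ k * y.eval (cos (2 * s))

def cosPowMulEvalDeriv (k : ℕ) (y : ℝ[X]) (s : ℝ) : ℝ :=
  cos s ^ k * (-2 * sin (2 * s) * (derivative y).eval (cos (2 * s)) -
    k * tan s * y.eval (cos (2 * s)))

theorem hasDerivAt_cosPowMulEval (k : ℕ) (y : ℝ[X]) {r : ℝ} (hc : cos r ≠ 0) :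
    HasDerivAt (cosPowMulEval k y) (cosPowMulEvalDeriv k y r) r :=
  (hasDerivAt_eval_cos_two_mul y r).cos_pow_mul k hc

theorem cosPowMulEval_radial_eigen (α μ : ℝ) (k : ℕ) {y : ℝ[X]}
    (hy : (1 - X ^ 2) * derivative (derivative y) +
        (C ((k : ℝ) - α) - C (α + k + 2) * X) * derivative y + C μ * y = 0)
    {r : ℝ} (hs : sin r ≠ 0) (hc : cos r ≠ 0) :
    ∃ g'', HasDerivAt (cosPowMulEvalDeriv k y) g'' r ∧
      g'' + ((2 * α + 1) * (cos r / sin r) - tan r) * cosPowMulEvalDeriv k y r -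
          k ^ 2 * tan r ^ 2 * cosPowMulEval k y r =
        -(4 * μ + 2 * k * (α + 1)) * cosPowMulEval k y r := by
  have hcot : sin (2 * r) * (cos r / sin r) = 1 + cos (2 * r) := by
    rw [sin_two_mul, cos_two_mul]; field_simp; ring
  have htan : sin (2 * r) * tan r = 1 - cos (2 * r) := by
    rw [tan_eq_sin_div_cos, sin_two_mul, cos_two_mul]; field_simp
    linear_combination 2 * sin_sq_add_cos_sq r
  have hsin : sin (2 * r) ^ 2 = 1 - cos (2 * r) ^ 2 := sin_sq _
  have hsec : 1 / cos r ^ 2 - tan r ^ 2 = 1 := by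
    rw [tan_eq_sin_div_cos]; field_simp; linear_combination -cos_sq_add_sin_sq r
  have hcot_tan : cos r / sin r * tan r = 1 := by
    rw [tan_eq_sin_div_cos]; field_simp
  have hF := hasDerivAt_eval_cos_two_mul y r
  have hF' := (((hasDerivAt_id r).const_mul 2).sin.const_mul (-2)).mul
    (hasDerivAt_eval_cos_two_mul (derivative y) r)
  have hG : HasDerivAt (cosPowMulEvalDeriv k y) _ r :=
    (hF'.sub (((hasDerivAt_tan hc).const_mul (k : ℝ)).mul hF)).cos_pow_mul k hc
  refine ⟨_, hG, ?_⟩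
  have hyx := congrArg (eval (cos (2 * r))) hy
  simp only [eval_add, eval_mul, eval_sub, eval_one, eval_pow, eval_X, eval_C, eval_zero] at hyx
  simp only [cosPowMulEvalDeriv, cosPowMulEval, Pi.sub_apply, Pi.mul_apply, id]
  set P := cos r ^ k
  set Y0 := y.eval (cos (2 * r))
  set Y1 := (derivative y).eval (cos (2 * r))
  set Y2 := (derivative (derivative y)).eval (cos (2 * r))
  linear_combination 4 * P * hyx + 4 * P * Y2 * hsin - 2 * (2 * α + 1) * P * Y1 * hcot
    + 2 * (2 * k + 1) * P * Y1 * htan - k * (2 * α + 1) * P * Y0 * hcot_tan - k * P * Y0 * hsec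

theorem hasDerivAt_cexp_mul_ofReal_mul_I (c : ℂ) (t : ℝ) :
    HasDerivAt (fun t : ℝ => Complex.exp (c * t * Complex.I))
      (c * Complex.I * Complex.exp (c * t * Complex.I)) t := by
  have h := ((Complex.ofRealCLM.hasDerivAt (x := t)).const_mul c).mul_const Complex.I
  simpa [mul_comm] using h.cexp

theorem hopfRadialH_exp_mul_ofReal (n k : ℕ) {g g' : ℝ → ℝ} {g'' r : ℝ}
    (hg : ∀ᶠ s in 𝓝 r, HasDerivAt g (g' s) s) (hg' : HasDerivAt g' g'' r) (θ : ℝ) :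
    hopfRadialH n (fun r θ => Complex.exp (k * θ * Complex.I) * (g r : ℂ)) r θ =
      Complex.exp (k * θ * Complex.I) *
        ((g'' + ((2 * n - 1) * (cos r / sin r) - tan r) * g' r -
          k ^ 2 * tan r ^ 2 * g r : ℝ) : ℂ) := by
  simp only [hopfRadialH]
  set E := Complex.exp (k * θ * Complex.I)
  have hr : deriv (fun s => E * (g s : ℂ)) r = E * g' r :=
    (hg.self_of_nhds.ofReal_comp.const_mul E).deriv
  have hr' : (fun s => deriv (fun s' => E * (g s' : ℂ)) s) =ᶠ[𝓝 r] fun s => E * g' s :=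
    hg.mono fun s hs => (hs.ofReal_comp.const_mul E).deriv
  have hθ : deriv (fun t => deriv (fun t' : ℝ =>
      Complex.exp (k * t' * Complex.I) * (g r : ℂ)) t) θ = -(k ^ 2 * E * g r) := by
    simp only [fun t => ((hasDerivAt_cexp_mul_ofReal_mul_I k t).mul_const (g r : ℂ)).deriv]
    rw [(((hasDerivAt_cexp_mul_ofReal_mul_I k θ).const_mul _).mul_const (g r : ℂ)).deriv]
    linear_combination (k ^ 2 * E * g r) * Complex.I_mul_I
  rw [hr'.deriv_eq, (hg'.ofReal_comp.const_mul E).deriv, hr, hθ]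
  push_cast
  ring

/-- The functions e^{ikθ}(cos r)^k P_m^{n-1,k}(cos 2r) are eigenfunctions of the
    radial horizontal Laplacian with eigenvalue -(4m(m+k+n) + 2kn). -/
theorem hopf_eigenfunctions (n k m : ℕ) (hn : 1 ≤ n) :
    ∀ r ∈ Ioo (0:ℝ) (Real.pi / 2), ∀ θ : ℝ,
      hopfRadialH n
        (fun r' θ' => Complex.exp ((k : ℂ) * θ' * Complex.I) *
          ((Real.cos r' ^ k * jacobiP n k m (Real.cos (2 * r')) : ℝ) : ℂ)) r θ =
      -((4 * (m : ℂ) * (m + k + n) + 2 * k * n)) *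
        (Complex.exp ((k : ℂ) * θ * Complex.I) *
          ((Real.cos r ^ k * jacobiP n k m (Real.cos (2 * r)) : ℝ) : ℂ)) := by
  obtain ⟨a, rfl⟩ : ∃ a, n = a + 1 := ⟨n - 1, by omega⟩
  intro r hr θ
  have hsin : ∀ s ∈ Ioo (0 : ℝ) (π / 2), 0 < sin s := fun s hs =>
    sin_pos_of_pos_of_lt_pi hs.1 (by linarith [hs.2, pi_pos])
  have hcos : ∀ s ∈ Ioo (0 : ℝ) (π / 2), 0 < cos s := fun s hs =>
    cos_pos_of_mem_Ioo ⟨by linarith [hs.1, pi_pos], hs.2⟩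
  have hg : ∀ s ∈ Ioo (0 : ℝ) (π / 2),
      cos s ^ k * jacobiP (a + 1) k m (cos (2 * s)) = cosPowMulEval k (jacobiPoly a k m) s := by
    intro s hs
    have hx : cos (2 * s) ∈ Ioo (-1) 1 := by
      rw [cos_two_mul]
      constructor <;> nlinarith [sin_sq_add_cos_sq s, hsin s hs, hcos s hs]
    rw [cosPowMulEval, jacobiP_eq_eval_jacobiPoly a k m hx]
  have hderiv : ∀ᶠ s in 𝓝 r, HasDerivAt (fun s => cos s ^ k * jacobiP (a + 1) k m (cos (2 * s)))
      (cosPowMulEvalDeriv k (jacobiPoly a k m) s) s :=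
    (isOpen_Ioo.eventually_mem hr).mono fun s hs =>
      (hasDerivAt_cosPowMulEval k _ (hcos s hs).ne').congr_of_eventuallyEq
        ((isOpen_Ioo.eventually_mem hs).mono hg)
  obtain ⟨g'', hg'', heigen⟩ := cosPowMulEval_radial_eigen a (m * (m + a + k + 1)) k
    (jacobiPoly_ode a k m) (hsin r hr).ne' (hcos r hr).ne'
  rw [hopfRadialH_exp_mul_ofReal (a + 1) k hderiv hg'' θ, hg r hr]
  have heigenC := congrArg (fun t : ℝ => (t : ℂ)) heigen
  push_cast at heigenC ⊢
  linear_combination Complex.exp (k * θ * Complex.I) * heigenC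
end
end

section
/- Under the change of function $\phi(t,r) = e^{-2nkt}(\cos r)^{k} g(t, \cos 2r)$, the parabolic equation $\partial_t \phi = \partial_r^2 \phi + ((2n-1)\cot r - \tan r)\partial_r \phi - k^2 \tan^2 r\, \phi$ on $(0,\pi/2)$ is equivalent to $\partial_t g = 4\mathcal{L}_k g$, where $\mathcal{L}_k = (1-x^2)\partial_x^2 + [(k+1-n) - (k+1+n)x]\partial_x$ on $(-1,1)$. -/
open Real Set

noncomputable section

/-- The Jacobi operator L_k = (1-x²) ∂_x² + [(k+1-n) - (k+1+n)x] ∂_x. -/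
def jacobiOp (n k : ℕ) (f : ℝ → ℝ) : ℝ → ℝ :=
  fun x => (1 - x ^ 2) * deriv (deriv f) x +
    (((k : ℝ) + 1 - n) - ((k : ℝ) + 1 + n) * x) * deriv f x

theorem hopf_key (n k : ℕ) (g : ℝ → ℝ → ℝ)
    (hg : ContDiffOn ℝ (⊤ : ℕ∞) (fun p : ℝ × ℝ => g p.1 p.2) (Ioi (0:ℝ) ×ˢ Ioo (-1:ℝ) 1))
    {t r : ℝ} (ht : t ∈ Ioi (0:ℝ)) (hr : r ∈ Ioo (0:ℝ) (Real.pi / 2)) :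
    deriv (fun s => Real.exp (-2 * n * k * s) * Real.cos r ^ k * g s (Real.cos (2 * r))) t
    - (deriv (fun s => deriv
          (fun s' => Real.exp (-2 * n * k * t) * Real.cos s' ^ k * g t (Real.cos (2 * s'))) s) r
      + ((2 * (n : ℝ) - 1) * (Real.cos r / Real.sin r) - Real.tan r) *
          deriv (fun s' => Real.exp (-2 * n * k * t) * Real.cos s' ^ k * g t (Real.cos (2 * s'))) r
      - (k : ℝ) ^ 2 * Real.tan r ^ 2 *
          (Real.exp (-2 * n * k * t) * Real.cos r ^ k * g t (Real.cos (2 * r))))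
    = Real.exp (-2 * n * k * t) * Real.cos r ^ k *
        (deriv (fun s => g s (Real.cos (2 * r))) t
          - 4 * jacobiOp n k (fun y => g t y) (Real.cos (2 * r))) := by
  obtain ⟨hr0, hr2⟩ := hr
  have hpi := Real.pi_pos
  have hX : ∀ r' : ℝ, r' ∈ Ioo (0:ℝ) (Real.pi/2) → Real.cos (2*r') ∈ Ioo (-1:ℝ) 1 := by
    intro r' ⟨h0, h2⟩
    constructor
    · have := Real.cos_lt_cos_of_nonneg_of_le_pi (by linarith) (le_refl Real.pi) (by linarith : 2*r' < Real.pi)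
      simpa [Real.cos_pi] using this
    · have := Real.cos_lt_cos_of_nonneg_of_le_pi (le_refl 0) (by linarith : 2*r' ≤ Real.pi) (by linarith : (0:ℝ) < 2*r')
      simpa [Real.cos_zero] using this
  have hXr : Real.cos (2*r) ∈ Ioo (-1:ℝ) 1 := hX r ⟨hr0, hr2⟩
  -- smoothness of u := fun y => g t y
  have hu : ContDiffOn ℝ (⊤ : ℕ∞) (fun y => g t y) (Ioo (-1:ℝ) 1) := by
    exact hg.comp ((contDiff_const.prodMk contDiff_id).contDiffOn)
      (fun y hy => Set.mk_mem_prod ht hy)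
  have hdu : ContDiffOn ℝ (⊤ : ℕ∞) (deriv (fun y => g t y)) (Ioo (-1:ℝ) 1) :=
    hu.deriv_of_isOpen isOpen_Ioo (by simp)
  have hu1 : ∀ x ∈ Ioo (-1:ℝ) 1, HasDerivAt (fun y => g t y) (deriv (fun y => g t y) x) x :=
    fun x hx => ((hu.differentiableOn (by simp) x hx).differentiableAt
      (isOpen_Ioo.mem_nhds hx)).hasDerivAt
  have hu2 : HasDerivAt (deriv (fun y => g t y))
      (deriv (deriv (fun y => g t y)) (Real.cos (2*r))) (Real.cos (2*r)) :=
    ((hdu.differentiableOn (by simp) _ hXr).differentiableAt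
      (isOpen_Ioo.mem_nhds hXr)).hasDerivAt
  -- time derivative
  have hv : HasDerivAt (fun s => g s (Real.cos (2*r)))
      (deriv (fun s => g s (Real.cos (2*r))) t) t := by
    have hgt : ContDiffAt ℝ (⊤ : ℕ∞) (fun p : ℝ×ℝ => g p.1 p.2) (t, Real.cos (2*r)) :=
      hg.contDiffAt ((isOpen_Ioi.prod isOpen_Ioo).mem_nhds ⟨ht, hXr⟩)
    have : DifferentiableAt ℝ (fun s => g s (Real.cos (2*r))) t :=
      (hgt.comp t ((contDiffAt_id (x := t)).prodMk contDiffAt_const)).differentiableAt (by simp)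
    exact this.hasDerivAt
  have hA : HasDerivAt (fun s => Real.exp (-2 * (n:ℝ) * (k:ℝ) * s))
      (Real.exp (-2 * (n:ℝ) * (k:ℝ) * t) * (-2 * (n:ℝ) * (k:ℝ) * 1)) t :=
    ((hasDerivAt_id t).const_mul (-2 * (n:ℝ) * (k:ℝ))).exp
  have htime : HasDerivAt (fun s => Real.exp (-2 * (n:ℝ) * (k:ℝ) * s) * Real.cos r ^ k * g s (Real.cos (2*r))) _ t :=
    (hA.mul_const (Real.cos r ^ k)).mul hv
  -- spatial first derivative on the interval
  set A := Real.exp (-2 * (n:ℝ) * (k:ℝ) * t) with hAdef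
  set F : ℝ → ℝ := fun r' => A * ((k:ℝ) * Real.cos r' ^ (k-1) * (-Real.sin r')) * g t (Real.cos (2*r'))
       + A * Real.cos r' ^ k * (deriv (fun y => g t y) (Real.cos (2*r')) * (-Real.sin (2*r') * (2*1))) with hFdef
  have hder1 : ∀ r' ∈ Ioo (0:ℝ) (Real.pi/2),
      HasDerivAt (fun s' => Real.exp (-2 * n * k * t) * Real.cos s' ^ k * g t (Real.cos (2 * s')))
        (F r') r' := by
    intro r' hr'
    exact (((Real.hasDerivAt_cos r').pow k).const_mul A).mul
      ((hu1 _ (hX r' hr')).comp r' (((hasDerivAt_id r').const_mul 2).cos))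
  have h2nd : deriv (fun s => deriv
      (fun s' => Real.exp (-2 * n * k * t) * Real.cos s' ^ k * g t (Real.cos (2 * s'))) s) r
      = deriv F r := by
    apply Filter.EventuallyEq.deriv_eq
    filter_upwards [isOpen_Ioo.mem_nhds ⟨hr0, hr2⟩] with x hx
    exact (hder1 x hx).deriv
  -- second derivative: differentiate F
  have hcos2 : HasDerivAt (fun x => Real.cos (2*x)) (-Real.sin (2*r) * (2*1)) r :=
    ((hasDerivAt_id r).const_mul 2).cos
  have hG1 := ((((Real.hasDerivAt_cos r).pow (k-1)).const_mul (k:ℝ)).mul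
      ((Real.hasDerivAt_sin r).neg)).const_mul A |>.mul ((hu1 _ hXr).comp r hcos2)
  have hG2 := (((Real.hasDerivAt_cos r).pow k).const_mul A).mul
      ((hu2.comp r hcos2).mul (((((hasDerivAt_id r).const_mul 2).sin).neg).mul_const (2*1)))
  have hF : deriv F r = _ := (hG1.add hG2).deriv
  rw [htime.deriv, h2nd, hF, (hder1 r ⟨hr0, hr2⟩).deriv, jacobiOp]
  have hs0 : Real.sin r ≠ 0 := (Real.sin_pos_of_pos_of_lt_pi hr0 (by linarith)).ne'
  have hc0 : Real.cos r ≠ 0 := (Real.cos_pos_of_mem_Ioo ⟨by linarith, hr2⟩).ne'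
  have hsc := Real.sin_sq_add_cos_sq r
  simp only [Function.comp_apply, id_eq, Function.comp, hFdef, Pi.mul_apply, Pi.pow_apply, Pi.neg_apply]
  rw [Real.cos_two_mul, Real.sin_two_mul, Real.tan_eq_sin_div_cos]
  set a := g t (2 * Real.cos r ^ 2 - 1)
  set b := deriv (fun y => g t y) (2 * Real.cos r ^ 2 - 1)
  set d := deriv (deriv fun y => g t y) (2 * Real.cos r ^ 2 - 1)
  set T := deriv (fun s => g s (2 * Real.cos r ^ 2 - 1)) t
  set c := Real.cos r
  set s := Real.sin r
  clear_value a b d T c s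
  rcases k with _ | k
  · push_cast
    field_simp
    linear_combination (-(4*A*c^2*b) - 16*A*c^4*d) * hsc
  · rcases k with _ | k
    · push_cast
      field_simp
      linear_combination (-(12*A*c^2*b) - 16*A*c^4*d) * hsc
    · simp only [Nat.add_sub_cancel]
      push_cast
      field_simp
      linear_combination (-((8*(k:ℝ)+20)*A*c^4*c^k*b) - 16*A*c^6*c^k*d) * hsc

/-- The change of function φ(t,r) = e^{-2nkt}(cos r)^k g(t, cos 2r) transforms the
    parabolic equation ∂_t φ = ∂_r² φ + ((2n-1) cot r - tan r) ∂_r φ - k² tan² r φ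
    into ∂_t g = 4 L_k g, and conversely. -/
theorem hopf_parabolic_change_of_function (n k : ℕ) (hn : 1 ≤ n)
    (g : ℝ → ℝ → ℝ)
    (hg : ContDiffOn ℝ (⊤ : ℕ∞) (fun p : ℝ × ℝ => g p.1 p.2) (Ioi (0:ℝ) ×ˢ Ioo (-1:ℝ) 1)) :
    (∀ t ∈ Ioi (0:ℝ), ∀ x ∈ Ioo (-1:ℝ) 1,
        deriv (fun s => g s x) t = 4 * jacobiOp n k (fun y => g t y) x)
    ↔
    (∀ t ∈ Ioi (0:ℝ), ∀ r ∈ Ioo (0:ℝ) (Real.pi / 2),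
        (deriv (fun s => Real.exp (-2 * n * k * s) * Real.cos r ^ k * g s (Real.cos (2 * r))) t
          =
          deriv (fun s => deriv
              (fun s' => Real.exp (-2 * n * k * t) * Real.cos s' ^ k * g t (Real.cos (2 * s'))) s) r
          + ((2 * (n : ℝ) - 1) * (Real.cos r / Real.sin r) - Real.tan r) *
              deriv (fun s' => Real.exp (-2 * n * k * t) * Real.cos s' ^ k * g t (Real.cos (2 * s'))) r
          - (k : ℝ) ^ 2 * Real.tan r ^ 2 *
              (Real.exp (-2 * n * k * t) * Real.cos r ^ k * g t (Real.cos (2 * r))))) := by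
  constructor
  · intro hgeq t ht r hr
    have hXr : Real.cos (2*r) ∈ Ioo (-1:ℝ) 1 := by
      obtain ⟨h0, h2⟩ := hr
      have hpi := Real.pi_pos
      constructor
      · have := Real.cos_lt_cos_of_nonneg_of_le_pi (by linarith) (le_refl Real.pi)
          (by linarith : 2*r < Real.pi)
        simpa [Real.cos_pi] using this
      · have := Real.cos_lt_cos_of_nonneg_of_le_pi (le_refl 0) (by linarith : 2*r ≤ Real.pi)
          (by linarith : (0:ℝ) < 2*r)
        simpa [Real.cos_zero] using this
    have hk := hopf_key n k g hg ht hr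
    rw [hgeq t ht _ hXr] at hk
    simp only [sub_self, mul_zero] at hk
    linarith [hk]
  · intro heq t ht x hx
    set r := Real.arccos x / 2 with hrdef
    have hpi := Real.pi_pos
    have hax : Real.arccos x < Real.pi := by
      rcases lt_or_eq_of_le (Real.arccos_le_pi x) with h | h
      · exact h
      · exfalso
        have h2 := Real.cos_arccos hx.1.le hx.2.le
        rw [h, Real.cos_pi] at h2
        linarith [hx.1]
    have hrIoo : r ∈ Ioo (0:ℝ) (Real.pi/2) := by
      constructor
      · have := Real.arccos_pos.2 hx.2
        rw [hrdef]; linarith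
      · rw [hrdef]; linarith
    have hcr : Real.cos (2*r) = x := by
      rw [hrdef, show 2 * (Real.arccos x / 2) = Real.arccos x by ring,
        Real.cos_arccos hx.1.le hx.2.le]
    have hk := hopf_key n k g hg ht hrIoo
    have h0 := heq t ht r hrIoo
    rw [h0, sub_self] at hk
    rw [hcr] at hk
    have hA : Real.exp (-2 * (n:ℝ) * (k:ℝ) * t) * Real.cos r ^ k ≠ 0 :=
      mul_ne_zero (Real.exp_ne_zero _)
        (pow_ne_zero _ (Real.cos_pos_of_mem_Ioo ⟨by linarith [hrIoo.1], hrIoo.2⟩).ne')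
    have := (mul_eq_zero.mp hk.symm).resolve_left hA
    linarith [this]


end
end
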